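/- Sharpness of the uniqueness theorem (Lemma 1): The condition 16·a·b·t₀² > 1 cannot be relaxed to equality. Precisely, there exist a measurable function f : ℝⁿ → ℂ not almost everywhere zero and constants A, B > 0 such that |f(x)| ≤ A·e^{−|x|²} for all x, and the function u(x,1) = ∫_{ℝⁿ} e^{i|x−y|²/4} f(y) dy satisfies |u(x,1)| ≤ B·e^{−|x|²/16} for all x ∈ ℝⁿ (so a = 1, b = 1/16, t₀ = 1 and 16abt₀² = 1). One may take f(x) = e^{−|x|² − i|x|²/4}. -/

import Mathlib

open MeasureTheory Real

open scoped RealInnerProductSpace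

/-! The chirp `e^{-i|y|²/4}` of `f` cancels the quadratic phase `e^{i|y|²/4}` of the kernel
`e^{i|x-y|²/4} = e^{i|x|²/4} e^{i|y|²/4} e^{-i⟨x,y⟩/2}`, so `u(x,1)` is `e^{i|x|²/4}` times the
Fourier transform of the Gaussian `e^{-|y|²}` at frequency `x/2`, namely `π^{n/2} e^{-|x|²/16}`. -/

section ChirpedGaussian

variable {V : Type*} [NormedAddCommGroup V]

noncomputable def chirpedGaussian (y : V) : ℂ :=
  Complex.exp (-(‖y‖ : ℂ) ^ 2 - Complex.I * (‖y‖ : ℂ) ^ 2 / 4)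

theorem continuous_chirpedGaussian : Continuous (chirpedGaussian (V := V)) := by
  unfold chirpedGaussian
  fun_prop

theorem chirpedGaussian_ne_zero (y : V) : chirpedGaussian y ≠ 0 :=
  Complex.exp_ne_zero _

theorem norm_chirpedGaussian (y : V) : ‖chirpedGaussian y‖ = rexp (-‖y‖ ^ 2) := by
  rw [chirpedGaussian, Complex.norm_exp]
  congr 1
  simp [← Complex.ofReal_pow]

variable [InnerProductSpace ℝ V]

theorem schrodingerKernel_mul_chirpedGaussian (x y : V) :
    Complex.exp (Complex.I * (‖x - y‖ ^ 2 : ℝ) / 4) * chirpedGaussian y =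
      Complex.exp (Complex.I * (‖x‖ : ℂ) ^ 2 / 4) *
        Complex.exp (-1 * (‖y‖ : ℂ) ^ 2 + (-Complex.I / 2) * (⟪x, y⟫ : ℂ)) := by
  rw [chirpedGaussian, ← Complex.exp_add, ← Complex.exp_add, norm_sub_sq_real]
  push_cast
  ring_nf

variable [FiniteDimensional ℝ V] [MeasurableSpace V] [BorelSpace V]

theorem integral_schrodingerKernel_mul_chirpedGaussian (x : V) :
    ∫ y, Complex.exp (Complex.I * (‖x - y‖ ^ 2 : ℝ) / 4) * chirpedGaussian y =
      Complex.exp (Complex.I * (‖x‖ : ℂ) ^ 2 / 4) *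
        ((π : ℂ) ^ (Module.finrank ℝ V / 2 : ℂ) * Complex.exp (-(‖x‖ : ℂ) ^ 2 / 16)) := by
  have hI : (-Complex.I / 2) ^ 2 = -1 / 4 := by
    rw [div_pow, neg_sq, Complex.I_sq]
    norm_num
  simp_rw [schrodingerKernel_mul_chirpedGaussian x]
  rw [integral_const_mul,
    GaussianFourier.integral_cexp_neg_mul_sq_norm_add (by norm_num : 0 < (1 : ℂ).re), hI,
    div_one]
  congr 3
  ring

theorem norm_integral_schrodingerKernel_mul_chirpedGaussian (x : V) :
    ‖∫ y, Complex.exp (Complex.I * (‖x - y‖ ^ 2 : ℝ) / 4) * chirpedGaussian y‖ =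
      π ^ (Module.finrank ℝ V / 2 : ℝ) * rexp (-‖x‖ ^ 2 / 16) := by
  rw [integral_schrodingerKernel_mul_chirpedGaussian, norm_mul, norm_mul,
    Complex.norm_cpow_eq_rpow_re_of_pos pi_pos, Complex.norm_exp, Complex.norm_exp]
  simp [← Complex.ofReal_pow]

end ChirpedGaussian

theorem schrodinger_uniqueness_sharp_general {n : ℕ} :
    ∃ (f : EuclideanSpace ℝ (Fin n) → ℂ) (A B : ℝ),
      Measurable f ∧ ¬ (f =ᵐ[volume] 0) ∧ 0 < A ∧ 0 < B ∧
      (∀ x : EuclideanSpace ℝ (Fin n), ‖f x‖ ≤ A * Real.exp (-‖x‖ ^ 2)) ∧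
      (∀ x : EuclideanSpace ℝ (Fin n),
        ‖∫ y, Complex.exp (Complex.I * (‖x - y‖ ^ 2 : ℝ) / 4) * f y‖
          ≤ B * Real.exp (-‖x‖ ^ 2 / 16)) := by
  refine ⟨chirpedGaussian, 1, π ^ (n / 2 : ℝ), continuous_chirpedGaussian.measurable, ?_,
    one_pos, by positivity, fun x => by rw [one_mul, norm_chirpedGaussian],
    fun x => ?_⟩
  · intro h
    have h_eq := (continuous_chirpedGaussian.ae_eq_iff_eq volume continuous_const).mp h
    exact chirpedGaussian_ne_zero 0 (congrFun h_eq 0)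
  · simpa using (norm_integral_schrodingerKernel_mul_chirpedGaussian x).le

/-- Sharpness of the uniqueness theorem (Lemma 1): at `16abt₀² = 1`
(with `a = 1`, `b = 1/16`, `t₀ = 1`) uniqueness fails; one may take
`f(x) = e^{−|x|² − i|x|²/4}`. -/
theorem schrodinger_uniqueness_sharp {n : ℕ} (hn : 1 ≤ n) :
    ∃ (f : EuclideanSpace ℝ (Fin n) → ℂ) (A B : ℝ),
      Measurable f ∧ ¬ (f =ᵐ[volume] 0) ∧ 0 < A ∧ 0 < B ∧
      (∀ x : EuclideanSpace ℝ (Fin n), ‖f x‖ ≤ A * Real.exp (-‖x‖ ^ 2)) ∧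
      (∀ x : EuclideanSpace ℝ (Fin n),
        ‖∫ y, Complex.exp (Complex.I * (‖x - y‖ ^ 2 : ℝ) / 4) * f y‖
          ≤ B * Real.exp (-‖x‖ ^ 2 / 16)) :=
  schrodinger_uniqueness_sharp_general
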